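/- arXiv:1705.09429 — 5 statements merged into one kernel-verified Lean document; each statement's English description precedes it below -/
import Mathlib

section
/- Let G be an n×N matrix over F_q. The linear encoding F(X) = XG is a valid (δ_s,𝒢)-ICSIE encoding if and only if ZG ≠ 0 for every Z ∈ I(q,𝒢,δ_s). -/
open Finset

/-- Restriction of a vector to the coordinates in a finite index set. -/
def proj {ι 𝔽 : Type*} (A : Finset ι) (x : ι → 𝔽) : {a // a ∈ A} → 𝔽 :=
  fun a => x a.1

/-- `enc` is a valid (δ,𝒢)-ICSIE encoding: decoders exist recovering the wanted
messages from the codeword and side information with at most `δ r` errors. -/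
def ValidEnc (𝔽 : Type*) [DecidableEq 𝔽] {ι R C : Type*}
    (X f : R → Finset ι) (δ : R → ℕ) (enc : (ι → 𝔽) → C) : Prop :=
  ∃ D : (r : R) → C → ({a // a ∈ X r} → 𝔽) → ({a // a ∈ f r} → 𝔽),
    ∀ (r : R) (x : ι → 𝔽) (xt : {a // a ∈ X r} → 𝔽),
      hammingDist (proj (X r) x) xt ≤ δ r → D r (enc x) xt = proj (f r) x

/-- The set I(q,𝒢,δ_s). -/
def ISet (𝔽 : Type*) [Zero 𝔽] [DecidableEq 𝔽] {ι R : Type*}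
    (X f : R → Finset ι) (δ : R → ℕ) : Set (ι → 𝔽) :=
  {Z | ∃ r : R, hammingNorm (proj (X r) Z) ≤ 2 * δ r ∧ proj (f r) Z ≠ 0}

/-!
A receiver can decode exactly when no two messages that it may confuse disagree on its wanted
coordinates: two messages are confusable when they have the same codeword and their side
information lies within distance `2δ`, since then a single corrupted side-information vector is
within `δ` of both. For a linear encoding, a confusable pair `(x, x')` is the same as a difference
`Z = x - x'` with `Z ⬝ G = 0` and at most `2δ` nonzero side-information coordinates, and
`Z ∈ I(q,𝒢,δ_s)` says precisely that such a `Z` is nonzero on the wanted coordinates.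
-/

theorem exists_hammingDist_le_of_hammingDist_le_add {ι : Type*} [Fintype ι] {β : ι → Type*}
    [∀ i, DecidableEq (β i)] {u v : ∀ i, β i} {a b : ℕ} (h : hammingDist u v ≤ a + b) :
    ∃ w, hammingDist u w ≤ a ∧ hammingDist w v ≤ b := by
  classical
  set T := univ.filter fun i => u i ≠ v i
  obtain ⟨S, hST, hS⟩ := exists_subset_card_eq (s := T) (Nat.sub_le #T a)
  -- `w` copies `u` on `S` and `v` elsewhere, so it differs from `u` on `T \ S` and from `v` on `S`.
  refine ⟨fun i => if i ∈ S then u i else v i, ?_, ?_⟩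
  · have hsub : (univ.filter fun i => u i ≠ if i ∈ S then u i else v i) ⊆ T \ S := by
      intro i
      by_cases hi : i ∈ S <;> simp [T, hi]
    calc hammingDist u _ ≤ #(T \ S) := card_le_card hsub
      _ ≤ a := by rw [card_sdiff_of_subset hST]; omega
  · have hsub : (univ.filter fun i => (if i ∈ S then u i else v i) ≠ v i) ⊆ S := by
      intro i
      by_cases hi : i ∈ S <;> simp [hi]
    calc hammingDist _ v ≤ #S := card_le_card hsub
      _ ≤ b := by have : #T = hammingDist u v := rfl; omega

theorem proj_sub {ι 𝔽 : Type*} [Sub 𝔽] (A : Finset ι) (x y : ι → 𝔽) :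
    proj A (x - y) = proj A x - proj A y :=
  rfl

theorem proj_zero {ι 𝔽 : Type*} [Zero 𝔽] (A : Finset ι) : proj A (0 : ι → 𝔽) = 0 :=
  rfl

theorem validEnc_iff {𝔽 : Type*} [Nonempty 𝔽] [DecidableEq 𝔽] {ι R C : Type*} (X f : R → Finset ι)
    (δ : R → ℕ) (enc : (ι → 𝔽) → C) :
    ValidEnc 𝔽 X f δ enc ↔ ∀ r x x', enc x = enc x' →
      hammingDist (proj (X r) x) (proj (X r) x') ≤ 2 * δ r → proj (f r) x = proj (f r) x' := by
  constructor
  · rintro ⟨D, hD⟩ r x x' henc hdist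
    obtain ⟨xt, hx, hx'⟩ :=
      exists_hammingDist_le_of_hammingDist_le_add (hdist.trans_eq (two_mul (δ r)))
    rw [← hD r x xt hx, ← hD r x' xt (by rwa [hammingDist_comm]), henc]
  · intro h
    refine ⟨fun r c xt => proj (f r) (Classical.epsilon fun x =>
      enc x = c ∧ hammingDist (proj (X r) x) xt ≤ δ r), fun r x xt hx => ?_⟩
    obtain ⟨henc, hx'⟩ := Classical.epsilon_spec (p := fun x' =>
      enc x' = enc x ∧ hammingDist (proj (X r) x') xt ≤ δ r) ⟨x, rfl, hx⟩
    refine h r _ x henc ?_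
    calc hammingDist (proj (X r) _) (proj (X r) x)
        ≤ hammingDist (proj (X r) _) xt + hammingDist xt (proj (X r) x) :=
          hammingDist_triangle _ _ _
      _ ≤ δ r + δ r := add_le_add hx' (by rwa [hammingDist_comm])
      _ = 2 * δ r := (two_mul _).symm

theorem validEnc_linear_iff_general
    {𝔽 : Type*} [Field 𝔽] [DecidableEq 𝔽]
    {n m N : ℕ} (X f : Fin m → Finset (Fin n)) (δ : Fin m → ℕ)
    (G : Matrix (Fin n) (Fin N) 𝔽) :
    ValidEnc 𝔽 X f δ (fun x => Matrix.vecMul x G) ↔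
      ∀ Z ∈ ISet 𝔽 X f δ, Matrix.vecMul Z G ≠ 0 := by
  rw [validEnc_iff]
  constructor
  · rintro h Z ⟨r, hweight, hwanted⟩ hZG
    refine hwanted (h r Z 0 (by simpa using hZG) ?_)
    rwa [proj_zero, hammingDist_zero_right]
  · intro h r x x' henc hdist
    by_contra hne
    refine h (x - x') ⟨r, ?_, ?_⟩ (by rw [Matrix.sub_vecMul, henc, sub_self])
    · rwa [proj_sub, ← neg_add_eq_sub, ← hammingDist_eq_hammingNorm, hammingDist_comm]
    · rwa [proj_sub, sub_ne_zero]

/-- the linear encoding `X ↦ X ⬝ G` is a valid (δ_s,𝒢)-ICSIE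
encoding iff `Z ⬝ G ≠ 0` for every `Z ∈ I(q,𝒢,δ_s)`. -/
theorem validEnc_linear_iff
    {𝔽 : Type*} [Field 𝔽] [Fintype 𝔽] [DecidableEq 𝔽]
    {n m N : ℕ} (X f : Fin m → Finset (Fin n)) (δ : Fin m → ℕ)
    (hdisj : ∀ i, Disjoint (f i) (X i))
    (G : Matrix (Fin n) (Fin N) 𝔽) :
    ValidEnc 𝔽 X f δ (fun x => Matrix.vecMul x G) ↔
      ∀ Z ∈ ISet 𝔽 X f δ, Matrix.vecMul Z G ≠ 0 :=
  validEnc_linear_iff_general X f δ G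
end

section
/- Suppose B = {i_1 < i_2 < ... < i_k} is a δ_s-cycle of 𝒢 (a nonempty element of Φ). Then the linear encoding of codelength n−1 that transmits the symbol X_j for every j ∈ [n]\B together with the k−1 sums X_{i_1}+X_{i_2}, X_{i_2}+X_{i_3}, ..., X_{i_{k−1}}+X_{i_k} is a valid (δ_s,𝒢)-ICSIE encoding; in particular, if 𝒢 is not δ_s-acyclic then N_opt^q(δ_s,𝒢) ≤ n−1. -/
open Finset

/-- Optimal codelength of a (δ,𝒢)-ICSIE. -/
noncomputable def Nopt (𝔽 : Type*) [DecidableEq 𝔽] {ι R : Type*}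
    (X f : R → Finset ι) (δ : R → ℕ) : ℕ :=
  sInf {N | ∃ enc : (ι → 𝔽) → (Fin N → 𝔽), ValidEnc 𝔽 X f δ enc}

/-- The family Φ: subsets `B` such that every receiver wanting a message of `B`
has at least `2δ+1` side information symbols inside `B`. -/
def Phi {ι R : Type*} [DecidableEq ι] (X f : R → Finset ι) (δ : R → ℕ) :
    Set (Finset ι) :=
  {B | ∀ r : R, (f r ∩ B).Nonempty → 2 * δ r + 1 ≤ (X r ∩ B).card}

/-!
A decoder exists as soon as two messages with the same codeword that are both within `δ r` of
the side information of receiver `r` agree on what `r` wants. For the cycle encoding, equal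
codewords force equality off `B`, and along `B` equal consecutive sums make the two messages
agree at all positions of `B` or at none. Disagreeing on all of `B` would put them at Hamming
distance at least `|X r ∩ B| ≥ 2δ + 1` on the side information of a receiver wanting part of
`B`, whereas both lie within `δ` of the same side information.
-/

section Decoding

variable {𝔽 ι R C : Type*} [DecidableEq 𝔽] {X f : R → Finset ι} {δ : R → ℕ}

theorem validEnc_of_forall_proj_eq [Nonempty 𝔽] {enc : (ι → 𝔽) → C}
    (h : ∀ r x y xt, enc x = enc y → hammingDist (proj (X r) x) xt ≤ δ r →
      hammingDist (proj (X r) y) xt ≤ δ r → proj (f r) x = proj (f r) y) :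
    ValidEnc 𝔽 X f δ enc := by
  classical
  refine ⟨fun r c xt =>
    if hc : ∃ x, enc x = c ∧ hammingDist (proj (X r) x) xt ≤ δ r then proj (f r) hc.choose
    else Classical.arbitrary _, fun r x xt hx => ?_⟩
  have hc : ∃ y, enc y = enc x ∧ hammingDist (proj (X r) y) xt ≤ δ r := ⟨x, rfl, hx⟩
  dsimp only
  rw [dif_pos hc]
  exact h r _ _ xt hc.choose_spec.1 hc.choose_spec.2 hx

theorem ValidEnc.comp_equiv {C' : Type*} {enc : (ι → 𝔽) → C} (h : ValidEnc 𝔽 X f δ enc)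
    (g : C ≃ C') : ValidEnc 𝔽 X f δ (g ∘ enc) := by
  obtain ⟨D, hD⟩ := h
  exact ⟨fun r c => D r (g.symm c), fun r x xt hx => by simpa using hD r x xt hx⟩

theorem Nopt_le_card_of_validEnc {α : Type*} [Fintype α] {enc : (ι → 𝔽) → α → 𝔽}
    (h : ValidEnc 𝔽 X f δ enc) : Nopt 𝔽 X f δ ≤ Fintype.card α :=
  Nat.sInf_le ⟨_, h.comp_equiv ((Fintype.equivFin α).arrowCongr (Equiv.refl 𝔽))⟩

end Decoding

theorem card_le_hammingDist_proj {ι 𝔽 : Type*} [DecidableEq 𝔽] {A S : Finset ι}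
    {x y : ι → 𝔽} (hS : S ⊆ A) (hxy : ∀ a ∈ S, x a ≠ y a) :
    S.card ≤ hammingDist (proj A x) (proj A y) := by
  classical
  calc S.card = (S.subtype (· ∈ A)).card := by
        rw [Finset.card_subtype, Finset.filter_true_of_mem hS]
    _ ≤ hammingDist (proj A x) (proj A y) := Finset.card_le_card fun a ha =>
        Finset.mem_filter.mpr ⟨Finset.mem_univ _, hxy a (Finset.mem_subtype.mp ha)⟩

theorem Fin.eq_iff_eq_of_add_succ_eq {M : Type*} [Add M] [IsCancelAdd M] {k : ℕ}
    {u v : Fin k → M}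
    (h : ∀ t (ht : t + 1 < k), u ⟨t, by omega⟩ + u ⟨t + 1, ht⟩ = v ⟨t, by omega⟩ + v ⟨t + 1, ht⟩)
    (s t : Fin k) : u s = v s ↔ u t = v t := by
  suffices key : ∀ i (hi : i < k), u ⟨i, hi⟩ = v ⟨i, hi⟩ ↔ u ⟨0, by omega⟩ = v ⟨0, by omega⟩ by
    rw [key s s.2, key t t.2]
  intro i
  induction i with
  | zero => intro; rfl
  | succ i ih =>
    intro hi
    rw [← ih (by omega)]
    have hsum := h i hi
    constructor
    · intro heq
      rw [heq] at hsum
      exact add_right_cancel hsum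
    · intro heq
      rw [heq] at hsum
      exact add_left_cancel hsum

section Cycle

variable {𝔽 ι : Type*} [LinearOrder ι] [Fintype ι]

def cycleEnc [Add 𝔽] (B : Finset ι) (x : ι → 𝔽) :
    ({a // a ∈ Finset.univ \ B} → 𝔽) × (Fin (B.card - 1) → 𝔽) :=
  (proj (Finset.univ \ B) x, fun j =>
    x (B.orderEmbOfFin rfl ⟨j.1, by omega⟩) + x (B.orderEmbOfFin rfl ⟨j.1 + 1, by omega⟩))

theorem cycleEnc_eq_iff_eq [Add 𝔽] [IsCancelAdd 𝔽] {B : Finset ι} {x y : ι → 𝔽}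
    (hxy : cycleEnc B x = cycleEnc B y) {a b : ι} (ha : a ∈ B) (hb : b ∈ B) :
    x a = y a ↔ x b = y b := by
  obtain ⟨s, rfl⟩ : a ∈ Set.range (B.orderEmbOfFin rfl) := by rwa [Finset.range_orderEmbOfFin]
  obtain ⟨t, rfl⟩ : b ∈ Set.range (B.orderEmbOfFin rfl) := by rwa [Finset.range_orderEmbOfFin]
  refine Fin.eq_iff_eq_of_add_succ_eq (u := x ∘ B.orderEmbOfFin rfl)
    (v := y ∘ B.orderEmbOfFin rfl) (fun i hi => ?_) s t
  exact congrFun (congrArg Prod.snd hxy) ⟨i, by omega⟩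

theorem cycleEnc_eq_outside [Add 𝔽] {B : Finset ι} {x y : ι → 𝔽}
    (hxy : cycleEnc B x = cycleEnc B y) {b : ι} (hb : b ∉ B) : x b = y b :=
  congrFun (congrArg Prod.fst hxy) ⟨b, by simpa using hb⟩

theorem validEnc_cycleEnc [Add 𝔽] [IsCancelAdd 𝔽] [Nonempty 𝔽] [DecidableEq 𝔽] {R : Type*}
    {X f : R → Finset ι} {δ : R → ℕ} {B : Finset ι} (hB : B ∈ Phi X f δ) :
    ValidEnc 𝔽 X f δ (cycleEnc B) := by
  refine validEnc_of_forall_proj_eq fun r x y xt hxy hx hy => funext fun ⟨b, hbf⟩ => ?_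
  by_cases hbB : b ∈ B
  swap
  · exact cycleEnc_eq_outside hxy hbB
  by_contra hne
  have hdisagree : ∀ a ∈ X r ∩ B, x a ≠ y a := fun a ha =>
    (cycleEnc_eq_iff_eq hxy (Finset.mem_inter.mp ha).2 hbB).not.mpr hne
  have hfar := card_le_hammingDist_proj Finset.inter_subset_left hdisagree
  have hnear := hammingDist_triangle_right (proj (X r) x) (proj (X r) y) xt
  have hcard := hB r ⟨b, Finset.mem_inter.mpr ⟨hbf, hbB⟩⟩
  omega

end Cycle

/-- if `B` is a δ_s-cycle (a nonempty member of Φ), then the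
encoding of codelength `n-1` transmitting `X_j` for `j ∉ B` together with the
consecutive sums `X_{i_1}+X_{i_2}, …, X_{i_{k-1}}+X_{i_k}` along the increasing
enumeration `i_1 < … < i_k` of `B` is a valid (δ_s,𝒢)-ICSIE encoding; in
particular `N_opt ≤ n - 1`. -/
theorem validEnc_of_deltaCycle
    {𝔽 : Type*} [Field 𝔽] [DecidableEq 𝔽]
    {n m : ℕ} (X f : Fin m → Finset (Fin n)) (δ : Fin m → ℕ)
    (B : Finset (Fin n)) (hB : B.Nonempty) (hBcyc : B ∈ Phi X f δ) :
    ValidEnc 𝔽 X f δ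
      (fun x => (proj (Finset.univ \ B) x,
        fun j : Fin (B.card - 1) =>
          x (B.orderEmbOfFin rfl ⟨j.1, by have := j.2; omega⟩) +
          x (B.orderEmbOfFin rfl ⟨j.1 + 1, by have := j.2; omega⟩)))
      ∧ Nopt 𝔽 X f δ ≤ n - 1 := by
  have hvalid : ValidEnc 𝔽 X f δ (cycleEnc B) := validEnc_cycleEnc hBcyc
  refine ⟨hvalid, ?_⟩
  have hk : 1 ≤ B.card := Finset.card_pos.mpr hB
  have hkn : B.card ≤ n := by simpa using B.card_le_univ
  calc Nopt 𝔽 X f δ ≤ Fintype.card ({a // a ∈ Finset.univ \ B} ⊕ Fin (B.card - 1)) :=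
        Nopt_le_card_of_validEnc (hvalid.comp_equiv (Equiv.sumArrowEquivProdArrow _ _ 𝔽).symm)
    _ = n - 1 := by
        rw [Fintype.card_sum, Fintype.card_coe, Finset.card_univ_sdiff, Fintype.card_fin,
          Fintype.card_fin]
        omega
end

section
/- Let (δ_s,𝒢) be an ICSIE instance and let (0,𝒢̄) be the instance obtained by replacing each side information set 𝒳_i by a subset 𝒳̄_i ⊆ 𝒳_i with |𝒳_i \ 𝒳̄_i| ≤ 2δ_s^(i) and setting all error resistance capabilities to 0 (messages and wanted sets unchanged). Then N_opt^q(0,𝒢̄) ≤ N_opt^q(δ_s,𝒢). -/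
/-!
If two message vectors have the same codeword and agree on `𝒳̄_i`, their side information
on `𝒳_i` differs in at most `|𝒳_i \ 𝒳̄_i| ≤ 2δ_s^(i)` coordinates, so some vector lies within
distance `δ_s^(i)` of both. The `δ_s`-error-correcting decoder of `R_i` returns the same wanted
messages for both, hence the codeword together with `X_{𝒳̄_i}` determines `X_{f(i)}`: every
valid `(δ_s, 𝒢)` encoding is already a valid `(0, 𝒢̄)` encoding.
-/

open Finset

open Classical in
theorem exists_hammingDist_le_of_hammingDist_le_two_mul {ι β : Type*} [Fintype ι]
    [DecidableEq β] {u v : ι → β} {k : ℕ} (h : hammingDist u v ≤ 2 * k) :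
    ∃ w : ι → β, hammingDist u w ≤ k ∧ hammingDist v w ≤ k := by
  set S : Finset ι := {i | u i ≠ v i}
  obtain ⟨T, hTS, hT⟩ := exists_subset_card_eq (min_le_right k #S)
  refine ⟨fun i => if i ∈ T then v i else u i, ?_, ?_⟩
  · have : ({i | u i ≠ if i ∈ T then v i else u i} : Finset ι) = T := by
      ext i
      by_cases hi : i ∈ T
      · simpa [hi] using (mem_filter.mp (hTS hi)).2
      · simp [hi]
    rw [hammingDist, this, hT]
    exact min_le_left _ _
  · have : ({i | v i ≠ if i ∈ T then v i else u i} : Finset ι) = S \ T := by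
      ext i
      by_cases hi : i ∈ T <;> simp [S, hi, ne_comm]
    rw [hammingDist, this, card_sdiff_of_subset hTS, hT]
    change #S ≤ 2 * k at h
    omega

theorem hammingDist_proj_le_card_sdiff {ι β : Type*} [DecidableEq ι] [DecidableEq β]
    (A B : Finset ι) {x y : ι → β} (h : proj B x = proj B y) :
    hammingDist (proj A x) (proj A y) ≤ #(A \ B) := by
  refine card_le_card_of_injOn Subtype.val (fun a ha => ?_) Subtype.val_injective.injOn
  have hne : x a ≠ y a := (mem_filter.mp ha).2
  exact mem_sdiff.mpr ⟨a.2, fun hB => hne (congrFun h ⟨a, hB⟩)⟩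

section ValidEnc

variable {𝔽 ι R C : Type*} [DecidableEq 𝔽] {X f : R → Finset ι} {δ : R → ℕ}
  {enc : (ι → 𝔽) → C}

theorem validEnc_id : ValidEnc 𝔽 X f δ (id : (ι → 𝔽) → ι → 𝔽) :=
  ⟨fun r c _ => proj (f r) c, fun _ _ _ _ => rfl⟩

theorem ValidEnc.proj_eq_of_enc_eq (h : ValidEnc 𝔽 X f δ enc) {r : R} {x x' : ι → 𝔽}
    (henc : enc x = enc x') (hdist : hammingDist (proj (X r) x) (proj (X r) x') ≤ 2 * δ r) :
    proj (f r) x = proj (f r) x' := by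
  obtain ⟨D, hD⟩ := h
  obtain ⟨w, hxw, hx'w⟩ := exists_hammingDist_le_of_hammingDist_le_two_mul hdist
  calc proj (f r) x = D r (enc x) w := (hD r x w hxw).symm
    _ = D r (enc x') w := by rw [henc]
    _ = proj (f r) x' := hD r x' w hx'w

theorem validEnc_zero_of_proj_eq [Nonempty 𝔽]
    (h : ∀ r x x', enc x = enc x' → proj (X r) x = proj (X r) x' →
      proj (f r) x = proj (f r) x') :
    ValidEnc 𝔽 X f (fun _ => 0) enc := by
  refine ⟨fun r c y => proj (f r) (Classical.epsilon fun x => enc x = c ∧ proj (X r) x = y),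
    fun r x y hy => ?_⟩
  have hxy : proj (X r) x = y := hammingDist_eq_zero.mp (Nat.le_zero.mp hy)
  obtain ⟨henc, hproj⟩ := Classical.epsilon_spec (p := fun x' => enc x' = enc x ∧
    proj (X r) x' = y) ⟨x, rfl, hxy⟩
  exact h r _ x henc (hproj.trans hxy.symm)

theorem ValidEnc.shrink [Nonempty 𝔽] [DecidableEq ι] {Xbar : R → Finset ι}
    (hcard : ∀ r, #(X r \ Xbar r) ≤ 2 * δ r) (h : ValidEnc 𝔽 X f δ enc) :
    ValidEnc 𝔽 Xbar f (fun _ => 0) enc :=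
  validEnc_zero_of_proj_eq fun r _ _ henc hbar =>
    h.proj_eq_of_enc_eq henc
      ((hammingDist_proj_le_card_sdiff (X r) (Xbar r) hbar).trans (hcard r))

theorem exists_validEnc_Nopt {n : ℕ} (X f : R → Finset (Fin n)) (δ : R → ℕ) :
    ∃ enc : (Fin n → 𝔽) → Fin (Nopt 𝔽 X f δ) → 𝔽, ValidEnc 𝔽 X f δ enc :=
  Nat.sInf_mem
    (⟨n, id, validEnc_id⟩ : ∃ N, ∃ enc : (Fin n → 𝔽) → Fin N → 𝔽, ValidEnc 𝔽 X f δ enc)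

end ValidEnc

theorem Nopt_shrink_le_general
    {𝔽 : Type*} [Field 𝔽] [DecidableEq 𝔽]
    {n m : ℕ} (X Xbar f : Fin m → Finset (Fin n)) (δ : Fin m → ℕ)
    (hcard : ∀ i, (X i \ Xbar i).card ≤ 2 * δ i) :
    Nopt 𝔽 Xbar f (fun _ => 0) ≤ Nopt 𝔽 X f δ := by
  obtain ⟨enc, henc⟩ := exists_validEnc_Nopt (𝔽 := 𝔽) X f δ
  exact Nat.sInf_le ⟨enc, henc.shrink hcard⟩

/-- shrinking each side information set `𝒳_i` to `𝒳̄_i ⊆ 𝒳_i`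
with `|𝒳_i \ 𝒳̄_i| ≤ 2δ_s^(i)` and setting all capabilities to 0 can only
decrease the optimal codelength: `N_opt(0,𝒢̄) ≤ N_opt(δ_s,𝒢)`. -/
theorem Nopt_shrink_le
    {𝔽 : Type*} [Field 𝔽] [Fintype 𝔽] [DecidableEq 𝔽]
    {n m : ℕ} (X Xbar f : Fin m → Finset (Fin n)) (δ : Fin m → ℕ)
    (hdisj : ∀ i, Disjoint (f i) (X i))
    (hsub : ∀ i, Xbar i ⊆ X i)
    (hcard : ∀ i, (X i \ Xbar i).card ≤ 2 * δ i) :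
    Nopt 𝔽 Xbar f (fun _ => 0) ≤ Nopt 𝔽 X f δ :=
  Nopt_shrink_le_general X Xbar f δ hcard
end

section
/- Let (δ_s,𝒢) be an ICSIE instance with n messages and m receivers, let s ∈ [n], and let t ∈ [m] be a receiver with s ∈ 𝒳_t. Let (δ_s′,𝒢′) be the instance with n+1 messages and m+1 receivers obtained from (δ_s,𝒢) by: adding a new message indexed n+1; adding a new receiver R_{m+1} with side information set {s}, wanted set {n+1}, and error resistance capability 0; and replacing 𝒳_t by (𝒳_t \ {s}) ∪ {n+1} (all other data unchanged). If F : F_q^n → F_q^N is a valid (δ_s,𝒢)-ICSIE encoding, then F′ : F_q^{n+1} → F_q^{N+1} defined by F′(X) = (F(X_{[n]}), X_{n+1} + X_s) is a valid (δ_s′,𝒢′)-ICSIE encoding. -/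
/-!
Receiver `t` loses the side information symbol `x_s` but gains `x_{n+1}`; together with the extra
code symbol `c = x_{n+1} + x_s` it recovers `x_s` as `c - x_{n+1}`, and this recovered value is wrong
exactly when its copy of `x_{n+1}` is. So every old receiver sees the old side information with no
more errors than before and decodes with `F`, while the new receiver, knowing `x_s` exactly, reads
`x_{n+1} = c - x_s`.

No decoder is written down: decoders exist iff no two messages with the same codeword, both
consistent with some side information, differ on the wanted coordinates.
-/

open Finset

theorem proj_eq_proj_iff {ι 𝔽 : Type*} {A : Finset ι} {x y : ι → 𝔽} :
    proj A x = proj A y ↔ ∀ a ∈ A, x a = y a := by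
  simp [funext_iff, proj]

theorem proj_image_eq_of_proj_comp_eq {ι κ 𝔽 : Type*} [DecidableEq κ] {A : Finset ι} {g : ι → κ}
    {x y : κ → 𝔽} (h : proj A (x ∘ g) = proj A (y ∘ g)) :
    proj (A.image g) x = proj (A.image g) y := by
  rw [proj_eq_proj_iff] at h ⊢
  simpa only [forall_mem_image, Function.comp_apply] using h

theorem hammingDist_le_hammingDist_of_injective {α β γ : Type*} [Fintype α] [Fintype β]
    [DecidableEq γ] {u v : α → γ} {u' v' : β → γ} (φ : α → β) (hφ : φ.Injective)
    (h : ∀ a, u a ≠ v a → u' (φ a) ≠ v' (φ a)) : hammingDist u v ≤ hammingDist u' v' :=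
  card_le_card_of_injOn φ (by simpa [Set.MapsTo] using h) hφ.injOn

section Unconfusable

variable {𝔽 ι C : Type*} [DecidableEq 𝔽]

def Unconfusable (A B : Finset ι) (d : ℕ) (enc : (ι → 𝔽) → C) : Prop :=
  ∀ (x y : ι → 𝔽) (xt : {a // a ∈ A} → 𝔽), hammingDist (proj A x) xt ≤ d →
    hammingDist (proj A y) xt ≤ d → enc x = enc y → proj B x = proj B y

theorem validEnc_iff_forall_unconfusable [Nonempty 𝔽] {R : Type*} {X f : R → Finset ι}
    {δ : R → ℕ} {enc : (ι → 𝔽) → C} :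
    ValidEnc 𝔽 X f δ enc ↔ ∀ r, Unconfusable (X r) (f r) (δ r) enc := by
  classical
  constructor
  · rintro ⟨D, hD⟩ r x y xt hx hy hxy
    rw [← hD r x xt hx, ← hD r y xt hy, hxy]
  · intro h
    refine ⟨fun r c xt =>
      if hc : ∃ x, enc x = c ∧ hammingDist (proj (X r) x) xt ≤ δ r then proj (f r) hc.choose
      else fun _ => Classical.arbitrary 𝔽, fun r x xt hx => ?_⟩
    have hc : ∃ x', enc x' = enc x ∧ hammingDist (proj (X r) x') xt ≤ δ r := ⟨x, rfl, hx⟩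
    simp only [dif_pos hc]
    exact h r _ x xt hc.choose_spec.2 hx hc.choose_spec.1

end Unconfusable

section SourceSplit

variable {𝔽 : Type*} [AddCommGroup 𝔽] [DecidableEq 𝔽] {n m N : ℕ}
  (X : Fin m → Finset (Fin n)) (s : Fin n) (t : Fin m)

def splitEnc (F : (Fin n → 𝔽) → (Fin N → 𝔽)) (x : Fin (n + 1) → 𝔽) : Fin (N + 1) → 𝔽 :=
  Fin.snoc (F fun i : Fin n => x i.castSucc) (x (Fin.last n) + x s.castSucc)

def splitSideInfo (j : Fin m) : Finset (Fin (n + 1)) :=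
  if j = t then ((X t).erase s).image Fin.castSucc ∪ {Fin.last n} else (X j).image Fin.castSucc

def splitIndex (j : Fin m) (i : Fin n) : Fin (n + 1) :=
  if j = t ∧ i = s then Fin.last n else i.castSucc

variable {X s t}

theorem splitIndex_mem {j : Fin m} {i : Fin n} (hi : i ∈ X j) :
    splitIndex s t j i ∈ splitSideInfo X s t j := by
  unfold splitIndex splitSideInfo
  by_cases hjt : j = t
  · subst hjt
    by_cases his : i = s <;> simp [his, hi]
  · simp [hjt, hi]

theorem splitIndex_injective (j : Fin m) : (splitIndex s t j).Injective := by
  intro i i' h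
  unfold splitIndex at h
  split_ifs at h with hi hi' hi'
  · exact hi.2.trans hi'.2.symm
  · exact absurd h.symm (Fin.castSucc_lt_last i').ne
  · exact absurd h (Fin.castSucc_lt_last i).ne
  · exact Fin.castSucc_injective n h

variable (X s t)

def recoveredSideInfo (j : Fin m) (c : 𝔽) (xt : {a // a ∈ splitSideInfo X s t j} → 𝔽) :
    {i // i ∈ X j} → 𝔽 :=
  fun i =>
    if j = t ∧ i.1 = s then c - xt ⟨splitIndex s t j i, splitIndex_mem i.2⟩
    else xt ⟨splitIndex s t j i, splitIndex_mem i.2⟩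

theorem hammingDist_recoveredSideInfo_le (j : Fin m) (x : Fin (n + 1) → 𝔽)
    (xt : {a // a ∈ splitSideInfo X s t j} → 𝔽) :
    hammingDist (proj (X j) fun i => x i.castSucc)
        (recoveredSideInfo X s t j (x (Fin.last n) + x s.castSucc) xt) ≤
      hammingDist (proj (splitSideInfo X s t j) x) xt := by
  refine hammingDist_le_hammingDist_of_injective
    (fun i => ⟨splitIndex s t j i, splitIndex_mem i.2⟩)
    (fun i i' h => Subtype.ext (splitIndex_injective j (congrArg Subtype.val h))) ?_
  rintro ⟨i, hi⟩ hne hxt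
  apply hne
  simp only [proj, recoveredSideInfo, splitIndex] at hxt ⊢
  split_ifs at hxt ⊢ with hji
  · rw [← hxt, hji.2, add_sub_cancel_left]
  · exact hxt

variable {X s t}

theorem unconfusable_splitEnc_last (F : (Fin n → 𝔽) → (Fin N → 𝔽)) :
    Unconfusable {s.castSucc} {Fin.last n} 0 (splitEnc s F) := by
  intro x y xt hx hy hxy
  have hs : x s.castSucc = y s.castSucc := by
    rw [Nat.le_zero, hammingDist_eq_zero] at hx hy
    simpa [proj_eq_proj_iff] using hx.trans hy.symm
  have hc := (Fin.snoc_injective2 hxy).2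
  rw [hs] at hc
  simpa [proj_eq_proj_iff] using add_right_cancel hc

theorem Unconfusable.splitEnc_castSucc {f : Fin m → Finset (Fin n)} {δ : Fin m → ℕ} {j : Fin m}
    {F : (Fin n → 𝔽) → (Fin N → 𝔽)} (hF : Unconfusable (X j) (f j) (δ j) F) :
    Unconfusable (splitSideInfo X s t j) ((f j).image Fin.castSucc) (δ j) (splitEnc s F) := by
  intro x y xt hx hy hxy
  obtain ⟨hFxy, hc⟩ := Fin.snoc_injective2 hxy
  apply proj_image_eq_of_proj_comp_eq
  refine hF _ _ (recoveredSideInfo X s t j (x (Fin.last n) + x s.castSucc) xt)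
    ((hammingDist_recoveredSideInfo_le X s t j x xt).trans hx) ?_ hFxy
  rw [hc]
  exact (hammingDist_recoveredSideInfo_le X s t j y xt).trans hy

end SourceSplit

theorem valid_after_source_split_general
    {𝔽 : Type*} [Field 𝔽] [DecidableEq 𝔽]
    {n m N : ℕ} (X f : Fin m → Finset (Fin n)) (δ : Fin m → ℕ)
    (s : Fin n) (t : Fin m)
    (F : (Fin n → 𝔽) → (Fin N → 𝔽)) (hF : ValidEnc 𝔽 X f δ F) :
    ValidEnc 𝔽
      (Fin.snoc
        (fun j : Fin m =>
          if j = t then ((X t).erase s).image Fin.castSucc ∪ {Fin.last n}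
          else (X j).image Fin.castSucc)
        ({s.castSucc} : Finset (Fin (n + 1))))
      (Fin.snoc (fun j : Fin m => (f j).image Fin.castSucc)
        ({Fin.last n} : Finset (Fin (n + 1))))
      (Fin.snoc δ 0)
      (fun x : Fin (n + 1) → 𝔽 =>
        (Fin.snoc (F fun i : Fin n => x i.castSucc)
          (x (Fin.last n) + x s.castSucc) : Fin (N + 1) → 𝔽)) := by
  rw [validEnc_iff_forall_unconfusable] at hF ⊢
  intro r
  induction r using Fin.lastCases with
  | last =>
    simp only [Fin.snoc_last]
    exact unconfusable_splitEnc_last F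
  | cast j =>
    simp only [Fin.snoc_castSucc]
    exact (hF j).splitEnc_castSucc

/-- splitting off a side-information source symbol. Add a new
message `n+1` and a new receiver (side information `{s}`, wanted set `{n+1}`,
capability 0), and replace `𝒳_t` by `(𝒳_t \ {s}) ∪ {n+1}`.  If `F` is a valid
(δ_s,𝒢)-ICSIE encoding, then `F′(X) = (F(X_{[n]}), X_{n+1} + X_s)` is a valid
(δ_s′,𝒢′)-ICSIE encoding. -/
theorem valid_after_source_split
    {𝔽 : Type*} [Field 𝔽] [Fintype 𝔽] [DecidableEq 𝔽]
    {n m N : ℕ} (X f : Fin m → Finset (Fin n)) (δ : Fin m → ℕ)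
    (hdisj : ∀ i, Disjoint (f i) (X i))
    (s : Fin n) (t : Fin m) (hst : s ∈ X t)
    (F : (Fin n → 𝔽) → (Fin N → 𝔽)) (hF : ValidEnc 𝔽 X f δ F) :
    ValidEnc 𝔽
      (Fin.snoc
        (fun j : Fin m =>
          if j = t then ((X t).erase s).image Fin.castSucc ∪ {Fin.last n}
          else (X j).image Fin.castSucc)
        ({s.castSucc} : Finset (Fin (n + 1))))
      (Fin.snoc (fun j : Fin m => (f j).image Fin.castSucc)
        ({Fin.last n} : Finset (Fin (n + 1))))
      (Fin.snoc δ 0)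
      (fun x : Fin (n + 1) → 𝔽 =>
        (Fin.snoc (F fun i : Fin n => x i.castSucc)
          (x (Fin.last n) + x s.castSucc) : Fin (N + 1) → 𝔽)) :=
  valid_after_source_split_general X f δ s t F hF
end

section
/- Let (δ_s,𝒢) be an ICSIE instance with n messages and m receivers, let e ∈ [n] be a message wanted by a receiver R_j with f(j) = {e}, and let t ∈ [m], t ≠ j, be a receiver with e ∈ 𝒳_t. Let (δ_s′,𝒢′) be the instance with n+1 messages and m+1 receivers obtained from (δ_s,𝒢) by: adding a new message indexed n+1; adding a new receiver R_{m+1} with side information set 𝒳_j, wanted set {n+1}, and error resistance capability δ_s^(j); and replacing 𝒳_t by (𝒳_t \ {e}) ∪ {n+1} (all other data unchanged). If F : F_q^n → F_q^N is a valid (δ_s,𝒢)-ICSIE encoding, then F′ : F_q^{n+1} → F_q^{N+1} defined by F′(X) = (F(X_{[n]}), X_e + X_{n+1}) is a valid (δ_s′,𝒢′)-ICSIE encoding. -/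
/-!
A receiver with side information on `A`, wanting `B` and tolerating `d` errors can decode `enc`
iff any two messages with the same codeword whose restrictions to `A` differ in at most `2 * d`
places agree on `B`: two words within distance `d` of a common received word are at distance at
most `2 * d`, and conversely any two such words have a common word within `d` of both.
In this decoder-free form every receiver of the new instance is handled by a monotone move.
The old receivers keep their property after relabelling messages along `Fin.castSucc` and
appending a codeword symbol. Since the new symbol `x_e + x_{n+1}` makes `x_e` and `x_{n+1}`
determine each other, `R_t` may exchange its side information `x_e` for `x_{n+1}` (the two are
wrong together), and the new receiver decodes `x_{n+1}` just as `R_j` decodes `x_e`.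
-/

open Finset

lemma hammingDist_proj {ι β : Type*} [DecidableEq β] (A : Finset ι) (x y : ι → β) :
    hammingDist (proj A x) (proj A y) = #{a ∈ A | x a ≠ y a} := by
  refine card_nbij (·.1) (fun a ha => ?_) (fun a _ b _ h => Subtype.ext h) (fun a ha => ?_)
  · exact mem_filter.2 ⟨a.2, (mem_filter.1 ha).2⟩
  · exact ⟨⟨a, (mem_filter.1 ha).1⟩, mem_filter.2 ⟨mem_univ _, (mem_filter.1 ha).2⟩, rfl⟩

lemma exists_hammingDist_le_and_le {ι β : Type*} [Fintype ι] [DecidableEq β] {u v : ι → β}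
    {a b : ℕ} (h : hammingDist u v ≤ a + b) :
    ∃ w, hammingDist u w ≤ a ∧ hammingDist w v ≤ b := by
  classical
  obtain ⟨T, hTS, hT⟩ := exists_subset_card_eq (min_le_right a (hammingDist u v))
  refine ⟨fun i => if i ∈ T then v i else u i, ?_, ?_⟩
  · have hT' : hammingDist u (fun i => if i ∈ T then v i else u i) = #T := by
      rw [hammingDist]
      congr 1
      ext i
      by_cases hi : i ∈ T
      · simpa [hi] using hTS hi
      · simp [hi]
    omega
  · have hT' : hammingDist (fun i => if i ∈ T then v i else u i) v = hammingDist u v - #T := by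
      rw [hammingDist, hammingDist, ← card_sdiff_of_subset hTS]
      congr 1
      ext i
      by_cases hi : i ∈ T <;> simp [hi]
    omega

def Decodable (𝔽 : Type*) [DecidableEq 𝔽] {ι C : Type*} (A B : Finset ι) (d : ℕ)
    (enc : (ι → 𝔽) → C) : Prop :=
  ∀ x y, enc x = enc y → #{a ∈ A | x a ≠ y a} ≤ 2 * d → ∀ b ∈ B, x b = y b

section Decodable

variable {𝔽 ι C : Type*} [DecidableEq 𝔽] {A B : Finset ι} {d : ℕ} {enc : (ι → 𝔽) → C}

theorem decodable_iff_exists_decoder [Nonempty 𝔽] :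
    Decodable 𝔽 A B d enc ↔ ∃ D : C → ({a // a ∈ A} → 𝔽) → ({a // a ∈ B} → 𝔽),
      ∀ x w, hammingDist (proj A x) w ≤ d → D (enc x) w = proj B x := by
  classical
  constructor
  · intro hdec
    refine ⟨fun c w => if h : ∃ x, enc x = c ∧ hammingDist (proj A x) w ≤ d then
      proj B h.choose else fun _ => Classical.arbitrary 𝔽, fun x w hxw => ?_⟩
    have h : ∃ z, enc z = enc x ∧ hammingDist (proj A z) w ≤ d := ⟨x, rfl, hxw⟩
    dsimp only
    rw [dif_pos h]
    obtain ⟨hzx, hzw⟩ := h.choose_spec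
    have hdist : #{a ∈ A | h.choose a ≠ x a} ≤ 2 * d := by
      rw [← hammingDist_proj]
      calc hammingDist (proj A h.choose) (proj A x)
          ≤ hammingDist (proj A h.choose) w + hammingDist w (proj A x) :=
            hammingDist_triangle _ _ _
        _ ≤ 2 * d := by rw [hammingDist_comm w]; omega
    funext b
    exact hdec _ _ hzx hdist b b.2
  · rintro ⟨D, hD⟩ x y hxy hdist b hb
    obtain ⟨w, hxw, hwy⟩ :=
      exists_hammingDist_le_and_le (u := proj A x) (v := proj A y) (a := d) (b := d)
        (by rw [hammingDist_proj]; omega)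
    have := (hD x w hxw).symm.trans (hxy ▸ hD y w (hammingDist_comm w _ ▸ hwy))
    exact congrFun this ⟨b, hb⟩

theorem validEnc_iff_forall_decodable [Nonempty 𝔽] {R : Type*} {X f : R → Finset ι}
    {δ : R → ℕ} : ValidEnc 𝔽 X f δ enc ↔ ∀ r, Decodable 𝔽 (X r) (f r) (δ r) enc := by
  simp only [ValidEnc, decodable_iff_exists_decoder, Classical.skolem]

theorem Decodable.of_comp {C' : Type*} (g : C → C') (h : Decodable 𝔽 A B d (g ∘ enc)) :
    Decodable 𝔽 A B d enc :=
  fun x y hxy => h x y (congrArg g hxy)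

theorem Decodable.mono_sideInfo {A' : Finset ι} (hA : A ⊆ A') (h : Decodable 𝔽 A B d enc) :
    Decodable 𝔽 A' B d enc :=
  fun x y hxy hdist => h x y hxy ((card_le_card (filter_subset_filter _ hA)).trans hdist)

theorem Decodable.of_determines {B' : Finset ι}
    (hB : ∀ x y, enc x = enc y → (∀ b ∈ B, x b = y b) → ∀ b ∈ B', x b = y b)
    (h : Decodable 𝔽 A B d enc) : Decodable 𝔽 A B' d enc :=
  fun x y hxy hdist => hB x y hxy (h x y hxy hdist)

theorem Decodable.image {κ : Type*} [DecidableEq κ] {φ : ι → κ} (hφ : Function.Injective φ)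
    (h : Decodable 𝔽 A B d enc) :
    Decodable 𝔽 (A.image φ) (B.image φ) d fun x => enc (x ∘ φ) := by
  intro x y hxy hdist
  rw [filter_image, card_image_of_injective _ hφ] at hdist
  simpa using h _ _ hxy hdist

theorem Decodable.exchange_sideInfo [DecidableEq ι] {e k : ι} (hk : k ∉ A)
    (hke : ∀ x y, enc x = enc y → x k = y k → x e = y e)
    (h : Decodable 𝔽 (insert e A) B d enc) : Decodable 𝔽 (insert k A) B d enc := by
  intro x y hxy hdist
  refine h x y hxy (le_trans ?_ hdist)
  rw [filter_insert, filter_insert]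
  by_cases hek : x e = y e
  · rw [if_neg (not_not.2 hek)]
    split_ifs
    exacts [card_le_card (subset_insert _ _), le_rfl]
  · rw [if_pos hek, if_pos (mt (hke x y hxy) hek),
      card_insert_of_notMem fun hk' => hk (mem_filter.1 hk').1]
    exact card_insert_le _ _

end Decodable

theorem valid_after_link_duplication_general
    {𝔽 : Type*} [Field 𝔽] [DecidableEq 𝔽]
    {n m N : ℕ} (X f : Fin m → Finset (Fin n)) (δ : Fin m → ℕ)
    (e : Fin n) (j t : Fin m) (hfj : f j = {e})
    (F : (Fin n → 𝔽) → (Fin N → 𝔽)) (hF : ValidEnc 𝔽 X f δ F) :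
    ValidEnc 𝔽
      (Fin.snoc
        (fun i : Fin m =>
          if i = t then ((X t).erase e).image Fin.castSucc ∪ {Fin.last n}
          else (X i).image Fin.castSucc)
        ((X j).image Fin.castSucc : Finset (Fin (n + 1))))
      (Fin.snoc (fun i : Fin m => (f i).image Fin.castSucc)
        ({Fin.last n} : Finset (Fin (n + 1))))
      (Fin.snoc δ (δ j))
      (fun x : Fin (n + 1) → 𝔽 =>
        (Fin.snoc (F fun i : Fin n => x i.castSucc)
          (x e.castSucc + x (Fin.last n)) : Fin (N + 1) → 𝔽)) := by
  set enc : (Fin (n + 1) → 𝔽) → (Fin (N + 1) → 𝔽) := fun x =>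
    Fin.snoc (F fun i : Fin n => x i.castSucc) (x e.castSucc + x (Fin.last n))
  have hlink (x y) (hxy : enc x = enc y) :
      x e.castSucc = y e.castSucc ↔ x (Fin.last n) = y (Fin.last n) := by
    have := congrFun hxy (Fin.last N)
    simp only [enc, Fin.snoc_last] at this
    constructor <;> intro h <;> rw [h] at this
    exacts [add_left_cancel this, add_right_cancel this]
  have hinit : Fin.init ∘ enc = fun x => F (x ∘ Fin.castSucc) :=
    funext fun x => Fin.init_snoc _ _
  have hbase (i : Fin m) :
      Decodable 𝔽 ((X i).image Fin.castSucc) ((f i).image Fin.castSucc) (δ i) enc :=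
    .of_comp Fin.init <| hinit ▸
      (validEnc_iff_forall_decodable.1 hF i).image (Fin.castSucc_injective n)
  rw [validEnc_iff_forall_decodable, Fin.forall_fin_succ']
  simp only [Fin.snoc_castSucc, Fin.snoc_last]
  refine ⟨fun i => ?_, ?_⟩
  · split_ifs with hit
    · subst hit
      rw [union_singleton]
      refine ((hbase i).mono_sideInfo ?_).exchange_sideInfo (by simp)
        fun x y hxy => (hlink x y hxy).2
      rw [image_erase (Fin.castSucc_injective n)]
      exact insert_erase_subset _ _
    · exact hbase i
  · refine (hbase j).of_determines ?_
    simp only [hfj, image_singleton, mem_singleton, forall_eq]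
    exact fun x y hxy => (hlink x y hxy).1

/-- duplicating a unicast message used as side information. Let
`e` be wanted by `R_j` with `f(j) = {e}` and let `t ≠ j` have `e ∈ 𝒳_t`. Add a
new message `n+1` and a new receiver (side information `𝒳_j`, wanted set
`{n+1}`, capability `δ_s^(j)`), and replace `𝒳_t` by `(𝒳_t \ {e}) ∪ {n+1}`.
If `F` is a valid (δ_s,𝒢)-ICSIE encoding, then
`F′(X) = (F(X_{[n]}), X_e + X_{n+1})` is a valid (δ_s′,𝒢′)-ICSIE encoding. -/
theorem valid_after_link_duplication
    {𝔽 : Type*} [Field 𝔽] [Fintype 𝔽] [DecidableEq 𝔽]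
    {n m N : ℕ} (X f : Fin m → Finset (Fin n)) (δ : Fin m → ℕ)
    (hdisj : ∀ i, Disjoint (f i) (X i))
    (e : Fin n) (j t : Fin m) (hfj : f j = {e}) (hjt : t ≠ j) (het : e ∈ X t)
    (F : (Fin n → 𝔽) → (Fin N → 𝔽)) (hF : ValidEnc 𝔽 X f δ F) :
    ValidEnc 𝔽
      (Fin.snoc
        (fun i : Fin m =>
          if i = t then ((X t).erase e).image Fin.castSucc ∪ {Fin.last n}
          else (X i).image Fin.castSucc)
        ((X j).image Fin.castSucc : Finset (Fin (n + 1))))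
      (Fin.snoc (fun i : Fin m => (f i).image Fin.castSucc)
        ({Fin.last n} : Finset (Fin (n + 1))))
      (Fin.snoc δ (δ j))
      (fun x : Fin (n + 1) → 𝔽 =>
        (Fin.snoc (F fun i : Fin n => x i.castSucc)
          (x e.castSucc + x (Fin.last n)) : Fin (N + 1) → 𝔽)) :=
  valid_after_link_duplication_general X f δ e j t hfj F hF
end
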